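/- Let π : M → B be a smooth fiber bundle with vertical bundle 𝒱 = ker dπ, and let ξ ⊂ TM be a codimension-one distribution given as ker α for a 1-form α such that dα restricted to ξ^ν := ξ ∩ 𝒱 is fiberwise nondegenerate. Define H = {v ∈ ξ : dα(v, w) = 0 for all w ∈ ξ^ν}. Then TM = H ⊕ 𝒱, i.e., H is an Ehresmann connection on π. -/

import Mathlib

/-- Let `π : M → B` be a (smooth) fiber bundle, modeled on normed
spaces, with vertical bundle `𝒱 = ker dπ`, and `ξ = ker α` a codimension-one
distribution such that `α` restricts to a contact form on each fiber, i.e.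
`𝒱 ⊄ ξ` and `dα` is nondegenerate on `ξ^ν = ξ ∩ 𝒱`.  Let
`H = {v ∈ ξ : dα(v,w) = 0 ∀ w ∈ ξ^ν}`.  Then `TM = H ⊕ 𝒱` pointwise, i.e. `H`
is an Ehresmann connection on `π`. -/
theorem stmt5 {M B : Type*} [NormedAddCommGroup M] [NormedSpace ℝ M]
    [FiniteDimensional ℝ M] [NormedAddCommGroup B] [NormedSpace ℝ B]
    (π : M → B) (hπ : Differentiable ℝ π)
    (hsub : ∀ x, Function.Surjective (fderiv ℝ π x))
    (α : M → M →L[ℝ] ℝ) (hα : Differentiable ℝ α)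
    (hαne : ∀ x, α x ≠ 0)
    -- α restricts to a contact form on each fiber:
    (hvert : ∀ x, ¬ LinearMap.ker (fderiv ℝ π x : M →ₗ[ℝ] B) ≤ LinearMap.ker (α x : M →ₗ[ℝ] ℝ))
    (hnd : ∀ x, ∀ u ∈ LinearMap.ker (α x : M →ₗ[ℝ] ℝ) ⊓ LinearMap.ker (fderiv ℝ π x : M →ₗ[ℝ] B),
      (∀ v ∈ LinearMap.ker (α x : M →ₗ[ℝ] ℝ) ⊓ LinearMap.ker (fderiv ℝ π x : M →ₗ[ℝ] B),
        fderiv ℝ α x u v - fderiv ℝ α x v u = 0) → u = 0)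
    (H : M → Submodule ℝ M)
    (hH : ∀ x, ∀ u : M, u ∈ H x ↔
      (u ∈ LinearMap.ker (α x : M →ₗ[ℝ] ℝ) ∧
        ∀ v ∈ LinearMap.ker (α x : M →ₗ[ℝ] ℝ) ⊓ LinearMap.ker (fderiv ℝ π x : M →ₗ[ℝ] B),
          fderiv ℝ α x u v - fderiv ℝ α x v u = 0)) :
    ∀ x, IsCompl (H x) (LinearMap.ker (fderiv ℝ π x : M →ₗ[ℝ] B)) := by
  intro x
  set D := fderiv ℝ α x with hDdef
  set W : Submodule ℝ M := LinearMap.ker (α x : M →ₗ[ℝ] ℝ) ⊓ LinearMap.ker (fderiv ℝ π x : M →ₗ[ℝ] B)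
    with hWdef
  -- the map z ↦ ω(z, ·) from W to its dual
  let T : W →ₗ[ℝ] Module.Dual ℝ W :=
  { toFun := fun z =>
    { toFun := fun v => D z v - D v z
      map_add' := by
        intro a b
        simp only [Submodule.coe_add, map_add, ContinuousLinearMap.add_apply]
        ring
      map_smul' := by
        intro c a
        simp only [Submodule.coe_smul, map_smul, ContinuousLinearMap.smul_apply,
          smul_eq_mul, RingHom.id_apply]
        ring }
    map_add' := by
      intro a b
      ext v
      simp only [Submodule.coe_add, map_add, ContinuousLinearMap.add_apply,
        LinearMap.coe_mk, AddHom.coe_mk, LinearMap.add_apply]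
      ring
    map_smul' := by
      intro c a
      ext v
      simp only [Submodule.coe_smul, map_smul, ContinuousLinearMap.smul_apply,
        smul_eq_mul, RingHom.id_apply, LinearMap.coe_mk, AddHom.coe_mk,
        LinearMap.smul_apply]
      ring }
  have hTinj : Function.Injective T := by
    rw [← LinearMap.ker_eq_bot, LinearMap.ker_eq_bot']
    intro z hz
    have : (z : M) = 0 := by
      refine hnd x z z.2 ?_
      intro v hv
      have := congrFun (congrArg (fun f => f.toFun) hz) ⟨v, hv⟩
      simpa [T] using this
    exact Subtype.ext this
  have hTsurj : Function.Surjective T := by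
    rwa [← LinearMap.injective_iff_surjective_of_finrank_eq_finrank
      (Subspace.dual_finrank_eq (K := ℝ) (V := W)).symm]
  constructor
  · -- disjoint
    rw [Submodule.disjoint_def]
    intro u huH huV
    rcases (hH x u).1 huH with ⟨huξ, hu0⟩
    exact hnd x u ⟨huξ, huV⟩ hu0
  · -- codisjoint
    rw [codisjoint_iff, eq_top_iff]
    intro w _
    rw [Submodule.mem_sup]
    -- find a vertical Reeb-like vector R with α x R ≠ 0
    obtain ⟨R, hRV, hRα⟩ : ∃ R, R ∈ LinearMap.ker (fderiv ℝ π x : M →ₗ[ℝ] B) ∧ α x R ≠ 0 := by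
      by_contra h
      push_neg at h
      exact hvert x fun v hv => LinearMap.mem_ker.2 (h v hv)
    set c : ℝ := α x w / α x R with hc
    set u : M := w - c • R with hu
    have huξ : u ∈ LinearMap.ker (α x : M →ₗ[ℝ] ℝ) := by
      simp only [hu, LinearMap.mem_ker, ContinuousLinearMap.coe_coe, map_sub, map_smul, smul_eq_mul, hc]
      field_simp
      ring
    -- represent the functional ω(u, ·) on W by some z ∈ W
    let f : Module.Dual ℝ W :=
    { toFun := fun v => D u v - D v u
      map_add' := by
        intro a b
        simp only [Submodule.coe_add, map_add, ContinuousLinearMap.add_apply]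
        ring
      map_smul' := by
        intro c a
        simp only [Submodule.coe_smul, map_smul, ContinuousLinearMap.smul_apply,
          smul_eq_mul, RingHom.id_apply]
        ring }
    obtain ⟨z, hz⟩ := hTsurj f
    have hzW : (z : M) ∈ W := z.2
    have hrep : ∀ v ∈ W, D (z : M) v - D v (z : M) = D u v - D v u := by
      intro v hv
      have := congrFun (congrArg (fun g => g.toFun) hz) ⟨v, hv⟩
      simpa [f, T] using this
    refine ⟨u - z, ?_, z + c • R, ?_, by rw [hu]; abel⟩
    · rw [hH x]
      constructor
      · exact Submodule.sub_mem _ huξ hzW.1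
      · intro v hv
        have h1 := hrep v hv
        simp only [← hDdef, map_sub, ContinuousLinearMap.sub_apply]
        linarith
    · exact Submodule.add_mem _ hzW.2 (Submodule.smul_mem _ _ hRV)
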